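/- arXiv:1105.0877 — 4 statements merged into one kernel-verified Lean document; each statement's English description precedes it below -/
import Mathlib

section
/- Let φ ∈ C_c^∞(ℝ^{1+n}), σ ∈ ℝ, and l ∈ ℕ. Then for all real ξ₀,…,ξₙ, (1 + |ξ₀ - iσ|^l + |ξ₁|^l + ⋯ + |ξₙ|^l) · |φ̂(-ξ₀ + iσ, -ξ₁,…,-ξₙ)| ≤ (‖φ‖_{L¹} + ∑_{ν=0}^n ‖∂_ν^l φ‖_{L¹}) · exp(H_φ(σ)), where H_φ(σ) = sup{σ x₀ : (x₀,…,xₙ) ∈ supp φ}. -/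
open MeasureTheory Complex

namespace Stmt2Aux

variable {m : ℕ}

/-- The Fourier–Laplace kernel. -/
noncomputable def K (ζ : Fin m → ℂ) (x : Fin m → ℝ) : ℂ :=
  Complex.exp (-Complex.I * ∑ μ, (x μ : ℂ) * ζ μ)

/-- The differential of the exponent, as a continuous linear map. -/
noncomputable def M (ζ : Fin m → ℂ) : (Fin m → ℝ) →L[ℝ] ℂ :=
  ∑ μ, (-Complex.I * ζ μ) • (Complex.ofRealCLM.comp (ContinuousLinearMap.proj μ))

lemma M_apply (ζ : Fin m → ℂ) (x : Fin m → ℝ) :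
    M ζ x = -Complex.I * ∑ μ, (x μ : ℂ) * ζ μ := by
  simp only [M, ContinuousLinearMap.sum_apply, ContinuousLinearMap.coe_smul',
    Pi.smul_apply, ContinuousLinearMap.coe_comp', Function.comp_apply,
    ContinuousLinearMap.proj_apply, Complex.ofRealCLM_apply, smul_eq_mul, Finset.mul_sum]
  exact Finset.sum_congr rfl fun μ _ => by ring

lemma M_single (ζ : Fin m → ℂ) (ν : Fin m) :
    M ζ (Pi.single ν 1) = -Complex.I * ζ ν := by
  rw [M_apply]
  congr 1
  have h : ∀ μ ∈ Finset.univ, μ ≠ ν → (((Pi.single ν (1:ℝ) : Fin m → ℝ) μ : ℂ)) * ζ μ = 0 := by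
    intro μ _ hμ
    simp [Pi.single_eq_of_ne hμ]
  rw [Finset.sum_eq_single_of_mem ν (Finset.mem_univ _) h]
  simp

lemma K_eq (ζ : Fin m → ℂ) : K ζ = fun x => Complex.exp (M ζ x) := by
  funext x; rw [K, M_apply]

lemma hasFDerivAt_K (ζ : Fin m → ℂ) (x : Fin m → ℝ) :
    HasFDerivAt (K ζ) (K ζ x • M ζ) x := by
  have h : HasFDerivAt (fun y => Complex.exp (M ζ y)) (Complex.exp (M ζ x) • M ζ) x :=
    (M ζ).hasFDerivAt.cexp
  rw [K_eq]
  exact h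

lemma differentiable_K (ζ : Fin m → ℂ) : Differentiable ℝ (K ζ) :=
  fun x => (hasFDerivAt_K ζ x).differentiableAt

lemma continuous_K (ζ : Fin m → ℂ) : Continuous (K ζ) :=
  (differentiable_K ζ).continuous

lemma fderiv_K_apply (ζ : Fin m → ℂ) (ν : Fin m) (x : Fin m → ℝ) :
    fderiv ℝ (K ζ) x (Pi.single ν 1) = -Complex.I * ζ ν * K ζ x := by
  rw [(hasFDerivAt_K ζ x).fderiv]
  rw [ContinuousLinearMap.smul_apply, M_single, smul_eq_mul]
  ring

lemma norm_K (ζ : Fin m → ℂ) (x : Fin m → ℝ) :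
    ‖K ζ x‖ = Real.exp (∑ μ, x μ * (ζ μ).im) := by
  rw [K, Complex.norm_exp]
  congr 1
  simp [Complex.mul_re, Complex.im_sum, Complex.mul_im]

lemma integrable_K_mul (ζ : Fin m → ℂ) (h : (Fin m → ℝ) → ℂ) (hc : Continuous h)
    (hcs : HasCompactSupport h) : Integrable fun x => K ζ x * h x :=
  ((continuous_K ζ).mul hc).integrable_of_hasCompactSupport (hcs.mul_left)

/-- Directional derivative operator. -/
noncomputable def Dv (v : Fin m → ℝ) (g : (Fin m → ℝ) → ℂ) : (Fin m → ℝ) → ℂ :=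
  fun x => fderiv ℝ g x v

lemma contDiff_Dv {v : Fin m → ℝ} {g : (Fin m → ℝ) → ℂ} (hg : ContDiff ℝ (⊤ : ℕ∞) g) :
    ContDiff ℝ (⊤ : ℕ∞) (Dv v g) :=
  (hg.fderiv_right (by simp)).clm_apply contDiff_const

lemma hasCompactSupport_Dv {v : Fin m → ℝ} {g : (Fin m → ℝ) → ℂ}
    (hg : HasCompactSupport g) : HasCompactSupport (Dv v g) := by
  have := hg.fderiv (𝕜 := ℝ)
  exact this.comp_left (g := fun L : (Fin m → ℝ) →L[ℝ] ℂ => L v) rfl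

lemma tsupport_Dv_subset {v : Fin m → ℝ} {g : (Fin m → ℝ) → ℂ} :
    tsupport (Dv v g) ⊆ tsupport g := by
  apply closure_minimal _ (isClosed_tsupport g)
  intro x hx
  apply support_fderiv_subset ℝ
  intro h0
  apply hx
  simp only [Dv, h0, ContinuousLinearMap.zero_apply]

lemma iter_contDiff (v : Fin m → ℝ) (l : ℕ) :
    ∀ g : (Fin m → ℝ) → ℂ, ContDiff ℝ (⊤ : ℕ∞) g → ContDiff ℝ (⊤ : ℕ∞) ((Dv v)^[l] g) := by
  induction l with
  | zero => exact fun g hg => hg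
  | succ l ih =>
    intro g hg
    rw [Function.iterate_succ_apply]
    exact ih _ (contDiff_Dv hg)

lemma iter_hasCompactSupport (v : Fin m → ℝ) (l : ℕ) :
    ∀ g : (Fin m → ℝ) → ℂ, HasCompactSupport g → HasCompactSupport ((Dv v)^[l] g) := by
  induction l with
  | zero => exact fun g hg => hg
  | succ l ih =>
    intro g hg
    rw [Function.iterate_succ_apply]
    exact ih _ (hasCompactSupport_Dv hg)

lemma iter_tsupport_subset (v : Fin m → ℝ) (l : ℕ) :
    ∀ g : (Fin m → ℝ) → ℂ, tsupport ((Dv v)^[l] g) ⊆ tsupport g := by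
  induction l with
  | zero => exact fun g => subset_rfl
  | succ l ih =>
    intro g
    rw [Function.iterate_succ_apply]
    exact (ih _).trans tsupport_Dv_subset

lemma iterate_eq_iteratedFDeriv (v : Fin m → ℝ) (l : ℕ) :
    ∀ (g : (Fin m → ℝ) → ℂ), ContDiff ℝ (⊤ : ℕ∞) g → ∀ x,
      (Dv v)^[l] g x = iteratedFDeriv ℝ l g x (fun _ => v) := by
  induction l with
  | zero => intro g hg x; simp
  | succ l ih =>
    intro g hg x
    have h1 : (Dv v)^[l+1] g = (Dv v)^[l] (Dv v g) := Function.iterate_succ_apply _ _ _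
    rw [h1, ih (Dv v g) (contDiff_Dv hg) x, iteratedFDeriv_succ_apply_right]
    have h2 : Dv v g = (ContinuousLinearMap.apply ℝ ℂ v) ∘ (fderiv ℝ g) := rfl
    rw [h2, ContinuousLinearMap.iteratedFDeriv_comp_left _ (hg.fderiv_right (m := (⊤ : ℕ∞)) (by simp)).contDiffAt (by exact_mod_cast le_top)]
    rfl

lemma ibp (ζ : Fin m → ℂ) (ν : Fin m) (g : (Fin m → ℝ) → ℂ)
    (hg : ContDiff ℝ (⊤ : ℕ∞) g) (hcs : HasCompactSupport g) :
    ∫ x, K ζ x * Dv (Pi.single ν 1) g x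
      = (Complex.I * ζ ν) * ∫ x, K ζ x * g x := by
  have hrw : (fun x => fderiv ℝ (K ζ) x (Pi.single ν 1) * g x)
      = fun x => (-Complex.I * ζ ν) * (K ζ x * g x) := by
    funext x; rw [fderiv_K_apply]; ring
  have h := integral_mul_fderiv_eq_neg_fderiv_mul_of_integrable
    (f := K ζ) (g := g) (v := Pi.single ν 1) (μ := volume)
    (by rw [hrw]; exact (integrable_K_mul ζ g hg.continuous hcs).const_mul _)
    (integrable_K_mul ζ (Dv (Pi.single ν 1) g) (contDiff_Dv hg).continuous
      (hasCompactSupport_Dv hcs))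
    (integrable_K_mul ζ g hg.continuous hcs)
    (fun x _ => differentiable_K ζ x) (fun x _ => hg.differentiable (by simp) x)
  calc ∫ x, K ζ x * Dv (Pi.single ν 1) g x
      = - ∫ x, fderiv ℝ (K ζ) x (Pi.single ν 1) * g x := h
    _ = - ∫ x, (-Complex.I * ζ ν) * (K ζ x * g x) := by rw [hrw]
    _ = - ((-Complex.I * ζ ν) * ∫ x, K ζ x * g x) := by rw [integral_const_mul]
    _ = (Complex.I * ζ ν) * ∫ x, K ζ x * g x := by ring

lemma key (ζ : Fin m → ℂ) (ν : Fin m) (l : ℕ) :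
    ∀ g : (Fin m → ℝ) → ℂ, ContDiff ℝ (⊤ : ℕ∞) g → HasCompactSupport g →
      ∫ x, K ζ x * ((Dv (Pi.single ν 1))^[l] g) x
        = (Complex.I * ζ ν)^l * ∫ x, K ζ x * g x := by
  induction l with
  | zero => intro g hg hcs; simp
  | succ l ih =>
    intro g hg hcs
    have h1 : (Dv (Pi.single ν 1))^[l+1] g = (Dv (Pi.single ν 1))^[l] (Dv (Pi.single ν 1) g) :=
      Function.iterate_succ_apply _ _ _
    rw [h1, ih _ (contDiff_Dv hg) (hasCompactSupport_Dv hcs), ibp ζ ν g hg hcs, pow_succ]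
    ring

lemma bound (ζ : Fin m → ℂ) (w : (Fin m → ℝ) → ℝ) (hw : Continuous w)
    (hK : ∀ x, ‖K ζ x‖ ≤ Real.exp (w x))
    (φ h : (Fin m → ℝ) → ℂ) (hφcs : HasCompactSupport φ)
    (hc : Continuous h) (hcs : HasCompactSupport h) (hsub : tsupport h ⊆ tsupport φ) :
    ‖∫ x, K ζ x * h x‖
      ≤ (∫ x, ‖h x‖) * Real.exp (sSup (w '' tsupport φ)) := by
  rcases (tsupport φ).eq_empty_or_nonempty with he | hne
  · have hh : h = 0 := by
      funext x
      by_contra hx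
      have : x ∈ tsupport h := subset_closure (Function.mem_support.2 hx)
      rw [he] at hsub
      exact absurd (hsub this) (Set.notMem_empty x)
    simp [hh]
  · set H := sSup (w '' tsupport φ) with hH
    have hbdd : BddAbove (w '' tsupport φ) := (hφcs.image hw).bddAbove
    have hHle : ∀ x ∈ tsupport φ, w x ≤ H := fun x hx => le_csSup hbdd ⟨x, hx, rfl⟩
    have hpt : ∀ x, ‖K ζ x * h x‖ ≤ Real.exp H * ‖h x‖ := by
      intro x
      by_cases hx : x ∈ tsupport φ
      · rw [norm_mul]
        exact mul_le_mul_of_nonneg_right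
          ((hK x).trans (Real.exp_le_exp.2 (hHle x hx))) (norm_nonneg _)
      · have hzero : h x = 0 := image_eq_zero_of_notMem_tsupport (fun hmem => hx (hsub hmem))
        simp only [hzero, mul_zero, norm_zero]
        positivity
    have hint : Integrable fun x => K ζ x * h x := integrable_K_mul ζ h hc hcs
    calc ‖∫ x, K ζ x * h x‖ = ‖∫ x, K ζ x * h x‖ := rfl
      _ ≤ ∫ x, ‖K ζ x * h x‖ := norm_integral_le_integral_norm _
      _ ≤ ∫ x, Real.exp H * ‖h x‖ := by
          apply integral_mono hint.norm _ hpt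
          exact (hc.norm.integrable_of_hasCompactSupport hcs.norm).const_mul _
      _ = Real.exp H * ∫ x, ‖h x‖ := integral_const_mul _ _
      _ = (∫ x, ‖h x‖) * Real.exp H := mul_comm _ _

end Stmt2Aux

open Stmt2Aux

/-- Estimate (2.9) of the paper: for φ ∈ C_c^∞(ℝ^{1+n}), σ ∈ ℝ and l ∈ ℕ,
(1 + |ξ₀ - iσ|^l + |ξ₁|^l + ⋯ + |ξₙ|^l)·|φ̂(-ξ₀+iσ, -ξ₁,…,-ξₙ)|
  ≤ (‖φ‖_{L¹} + ∑_ν ‖∂_ν^l φ‖_{L¹})·exp(H_φ(σ)),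
where H_φ(σ) = sup{σ x₀ : x ∈ supp φ} and φ̂ is the Fourier–Laplace transform. -/
theorem stmt2 (n : ℕ) (φ : (Fin (n + 1) → ℝ) → ℂ)
    (hφ : ContDiff ℝ (⊤ : ℕ∞) φ) (hsupp : HasCompactSupport φ)
    (σ : ℝ) (l : ℕ) (ξ : Fin (n + 1) → ℝ) :
    (1 + ‖(ξ 0 : ℂ) - σ * Complex.I‖ ^ l + ∑ ν : Fin n, |ξ ν.succ| ^ l)
        * ‖∫ x : Fin (n + 1) → ℝ,
              Complex.exp (-Complex.I * ∑ μ, (x μ : ℂ) *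
                ((Fin.cons (-(ξ 0 : ℂ) + σ * Complex.I)
                  (fun ν : Fin n => (-(ξ ν.succ) : ℂ)) : Fin (n + 1) → ℂ) μ)) * φ x‖
      ≤ ((∫ x : Fin (n + 1) → ℝ, ‖φ x‖)
          + ∑ ν : Fin (n + 1),
              ∫ x : Fin (n + 1) → ℝ,
                ‖iteratedFDeriv ℝ l φ x (fun _ => Pi.single ν 1)‖)
        * Real.exp (sSup ((fun x : Fin (n + 1) → ℝ => σ * x 0) '' tsupport φ)) := by
  set ζ : Fin (n + 1) → ℂ := (Fin.cons (-(ξ 0 : ℂ) + σ * Complex.I)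
    (fun ν : Fin n => (-(ξ ν.succ) : ℂ)) : Fin (n + 1) → ℂ) with hζ
  -- rewrite the integral using the kernel K
  have hKdef : (∫ x : Fin (n + 1) → ℝ,
      Complex.exp (-Complex.I * ∑ μ, (x μ : ℂ) * ζ μ) * φ x) = ∫ x, K ζ x * φ x := rfl
  rw [hKdef]
  -- norm of the kernel
  have hKnorm : ∀ x : Fin (n + 1) → ℝ, ‖K ζ x‖ ≤ Real.exp (σ * x 0) := by
    intro x
    rw [norm_K]
    apply le_of_eq
    congr 1
    rw [Fin.sum_univ_succ]
    have h0 : (ζ 0).im = σ := by simp [hζ]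
    have hs : ∀ ν : Fin n, (ζ ν.succ).im = 0 := by
      intro ν; simp [hζ]
    simp only [h0]
    rw [Finset.sum_eq_zero (fun ν _ => by rw [hs ν, mul_zero])]
    ring
  set w : (Fin (n + 1) → ℝ) → ℝ := fun x => σ * x 0 with hwdef
  have hwcont : Continuous w := continuous_const.mul ((continuous_apply 0))
  set A := Real.exp (sSup (w '' tsupport φ)) with hA
  have hA0 : 0 ≤ A := Real.exp_nonneg _
  -- bound for each term
  have h0 : ‖∫ x, K ζ x * φ x‖ ≤ (∫ x, ‖φ x‖) * A :=
    bound ζ w hwcont hKnorm φ φ hsupp hφ.continuous hsupp subset_rfl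
  have hν : ∀ ν : Fin (n + 1),
      ‖ζ ν‖ ^ l * ‖∫ x, K ζ x * φ x‖
        ≤ (∫ x, ‖iteratedFDeriv ℝ l φ x (fun _ => Pi.single ν 1)‖) * A := by
    intro ν
    have hkey := key ζ ν l φ hφ hsupp
    have habs : ‖ζ ν‖ ^ l * ‖∫ x, K ζ x * φ x‖
        = ‖∫ x, K ζ x * ((Dv (Pi.single ν 1))^[l] φ) x‖ := by
      rw [hkey, norm_mul, norm_pow, norm_mul, Complex.norm_I, one_mul]
    rw [habs]
    have hb := bound ζ w hwcont hKnorm φ ((Dv (Pi.single ν 1))^[l] φ) hsupp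
      (iter_contDiff _ l φ hφ).continuous (iter_hasCompactSupport _ l φ hsupp)
      (iter_tsupport_subset _ l φ)
    have hnorm_eq : (∫ x, ‖(Dv (Pi.single ν 1))^[l] φ x‖)
        = ∫ x, ‖iteratedFDeriv ℝ l φ x (fun _ => Pi.single ν 1)‖ := by
      congr 1
      funext x
      rw [iterate_eq_iteratedFDeriv (Pi.single ν 1) l φ hφ x]
    rw [hnorm_eq] at hb
    exact hb
  -- identify the coefficients on the left-hand side
  have hζ0 : ‖(ξ 0 : ℂ) - σ * Complex.I‖ = ‖ζ 0‖ := by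
    have : ζ 0 = -((ξ 0 : ℂ) - σ * Complex.I) := by simp [hζ]; ring
    rw [this, norm_neg]
  have hζs : ∀ ν : Fin n, |ξ ν.succ| = ‖ζ ν.succ‖ := by
    intro ν
    have : ζ ν.succ = ((-(ξ ν.succ) : ℝ) : ℂ) := by simp [hζ]
    rw [this, Complex.norm_real, Real.norm_eq_abs, abs_neg]
  have hLHS : (1 + ‖(ξ 0 : ℂ) - σ * Complex.I‖ ^ l + ∑ ν : Fin n, |ξ ν.succ| ^ l)
      = 1 + ∑ ν : Fin (n + 1), ‖ζ ν‖ ^ l := by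
    rw [Fin.sum_univ_succ, hζ0]
    rw [Finset.sum_congr rfl (fun ν _ => by rw [hζs ν])]
    ring
  rw [hLHS]
  have hldist : (1 + ∑ ν : Fin (n + 1), ‖ζ ν‖ ^ l)
        * ‖∫ x, K ζ x * φ x‖
      = ‖∫ x, K ζ x * φ x‖
        + ∑ ν : Fin (n + 1), ‖ζ ν‖ ^ l * ‖∫ x, K ζ x * φ x‖ := by
    rw [add_mul, one_mul, Finset.sum_mul]
  have hrdist : ((∫ x, ‖φ x‖)
          + ∑ ν : Fin (n + 1),
              ∫ x, ‖iteratedFDeriv ℝ l φ x (fun _ => Pi.single ν 1)‖) * A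
      = (∫ x, ‖φ x‖) * A
        + ∑ ν : Fin (n + 1),
            (∫ x, ‖iteratedFDeriv ℝ l φ x (fun _ => Pi.single ν 1)‖) * A := by
    rw [add_mul, Finset.sum_mul]
  rw [hldist, hrdist]
  exact add_le_add h0 (Finset.sum_le_sum fun ν _ => hν ν)
end

section
/- Let P be a polynomial in 1+n complex variables, and suppose there exist constants c, μ, μ' > 0 and ω₀ ∈ ℝ such that for all σ > ω₀ and (ξ₀,…,ξₙ) ∈ ℝ^{1+n}: |P(σ+iξ₀, iξ₁,…,iξₙ)| ≥ c (σ - ω₀)^μ (1 + |σ+iξ₀| + (ξ₁²+⋯+ξₙ²)^{1/2})^{-μ'}. Then for each fixed σ > ω₀, every partial derivative ∂^α of the function N̂_σ(ξ) = 1/P(σ+iξ₀, iξ₁,…,iξₙ) is bounded by a constant times (1+|ξ|)^{m_α} for some m_α ∈ ℕ; i.e., N̂_σ is a smooth slowly increasing function (belongs to 𝒪_M(ℝ^{1+n})). -/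
open MvPolynomial Complex

open Function Finset
open scoped ContDiff

variable {E F : Type*} [NormedAddCommGroup E] [NormedSpace ℝ E]
  [NormedAddCommGroup F] [NormedSpace ℝ F]

private lemma myContDiffNat {f : E → F} (hf : ContDiff ℝ ∞ f) (i : ℕ) : ContDiff ℝ i f :=
  hf.of_le (by exact_mod_cast le_top)

private lemma aux_smul_bound [NormedSpace ℂ F] [IsScalarTower ℝ ℂ F] {f : E → ℂ} {B : E → F}
    (hf : ContDiff ℝ ∞ f) (hB : ContDiff ℝ ∞ B) {k : ℕ} {Cf CB : ℝ} {mf mB : ℕ}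
    (hCf : 0 ≤ Cf) (hCB : 0 ≤ CB)
    (hfb : ∀ i ≤ k, ∀ x, ‖iteratedFDeriv ℝ i f x‖ ≤ Cf * (1 + ‖x‖) ^ mf)
    (hBb : ∀ i ≤ k, ∀ x, ‖iteratedFDeriv ℝ i B x‖ ≤ CB * (1 + ‖x‖) ^ mB) (x : E) :
    ‖iteratedFDeriv ℝ k (fun y => f y • B y) x‖ ≤ 2 ^ k * Cf * CB * (1 + ‖x‖) ^ (mf + mB) := by
  have h1 : (0:ℝ) ≤ 1 + ‖x‖ := by positivity
  calc ‖iteratedFDeriv ℝ k (fun y => f y • B y) x‖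
      ≤ ∑ i ∈ Finset.range (k+1), (k.choose i : ℝ) * ‖iteratedFDeriv ℝ i f x‖ *
          ‖iteratedFDeriv ℝ (k-i) B x‖ :=
        norm_iteratedFDeriv_smul_le hf hB x (by exact_mod_cast le_top)
    _ ≤ ∑ i ∈ Finset.range (k+1), (k.choose i : ℝ) * (Cf * (1+‖x‖)^mf) *
          (CB * (1+‖x‖)^mB) := by
        apply Finset.sum_le_sum
        intro i hi
        rw [Finset.mem_range] at hi
        have hi' : i ≤ k := by omega
        gcongr
        · exact hfb i hi' x
        · exact hBb (k - i) (by omega) x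
    _ = (∑ i ∈ Finset.range (k+1), (k.choose i : ℝ)) *
          (Cf * (1+‖x‖)^mf * (CB * (1+‖x‖)^mB)) := by
        rw [Finset.sum_mul]; apply Finset.sum_congr rfl; intro i _; ring
    _ = 2 ^ k * Cf * CB * (1 + ‖x‖) ^ (mf + mB) := by
        have : (∑ i ∈ Finset.range (k+1), (k.choose i : ℝ)) = 2 ^ k := by
          exact_mod_cast congrArg (Nat.cast : ℕ → ℝ) (Nat.sum_range_choose k)
        rw [this, pow_add]; ring

private lemma aux_mul_bound {f g : E → ℂ}
    (hf : ContDiff ℝ ∞ f) (hg : ContDiff ℝ ∞ g) {k : ℕ} {Cf Cg : ℝ} {mf mg : ℕ}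
    (hCf : 0 ≤ Cf) (hCg : 0 ≤ Cg)
    (hfb : ∀ i ≤ k, ∀ x, ‖iteratedFDeriv ℝ i f x‖ ≤ Cf * (1 + ‖x‖) ^ mf)
    (hgb : ∀ i ≤ k, ∀ x, ‖iteratedFDeriv ℝ i g x‖ ≤ Cg * (1 + ‖x‖) ^ mg) (x : E) :
    ‖iteratedFDeriv ℝ k (fun y => f y * g y) x‖ ≤ 2 ^ k * Cf * Cg * (1 + ‖x‖) ^ (mf + mg) := by
  simpa only [smul_eq_mul] using aux_smul_bound hf hg hCf hCg hfb hgb x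

private lemma tg_add {f g : E → F} (hf : Function.HasTemperateGrowth f)
    (hg : Function.HasTemperateGrowth g) :
    Function.HasTemperateGrowth (fun x => f x + g x) := by
  refine ⟨hf.1.add hg.1, fun k => ?_⟩
  obtain ⟨mf, Cf, hfb⟩ := hf.2 k
  obtain ⟨mg, Cg, hgb⟩ := hg.2 k
  refine ⟨max mf mg, max Cf 0 + max Cg 0, fun x => ?_⟩
  have h1 : (1:ℝ) ≤ 1 + ‖x‖ := by linarith [norm_nonneg x]
  have key : ∀ (C : ℝ) (m : ℕ), m ≤ max mf mg → C * (1+‖x‖)^m ≤ max C 0 * (1+‖x‖)^(max mf mg) := by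
    intro C m hm
    have h2 : C * (1+‖x‖)^m ≤ max C 0 * (1+‖x‖)^m :=
      mul_le_mul_of_nonneg_right (le_max_left _ _) (by positivity)
    exact h2.trans (mul_le_mul_of_nonneg_left (pow_le_pow_right₀ h1 hm) (le_max_right _ _))
  have hfg : (fun x => f x + g x) = f + g := rfl
  rw [hfg, iteratedFDeriv_add_apply (myContDiffNat hf.1 k).contDiffAt (myContDiffNat hg.1 k).contDiffAt]
  calc ‖iteratedFDeriv ℝ k f x + iteratedFDeriv ℝ k g x‖
      ≤ ‖iteratedFDeriv ℝ k f x‖ + ‖iteratedFDeriv ℝ k g x‖ := norm_add_le _ _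
    _ ≤ max Cf 0 * (1+‖x‖)^(max mf mg) + max Cg 0 * (1+‖x‖)^(max mf mg) :=
        add_le_add ((hfb x).trans (key Cf mf (le_max_left _ _)))
          ((hgb x).trans (key Cg mg (le_max_right _ _)))
    _ = (max Cf 0 + max Cg 0) * (1+‖x‖)^(max mf mg) := by ring

private lemma tg_mul {f g : E → ℂ} (hf : Function.HasTemperateGrowth f)
    (hg : Function.HasTemperateGrowth g) :
    Function.HasTemperateGrowth (fun x => f x * g x) := by
  refine ⟨hf.1.mul hg.1, fun k => ?_⟩
  obtain ⟨mf, Cf, hCf, hfb⟩ := hf.norm_iteratedFDeriv_le_uniform k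
  obtain ⟨mg, Cg, hCg, hgb⟩ := hg.norm_iteratedFDeriv_le_uniform k
  exact ⟨mf + mg, 2^k * Cf * Cg, fun x => aux_mul_bound hf.1 hg.1 hCf hCg hfb hgb x⟩

private lemma uniformize {f : E → F} :
    ∀ k : ℕ, (∀ i ≤ k, ∃ (m : ℕ) (C : ℝ), 0 ≤ C ∧
        ∀ x, ‖iteratedFDeriv ℝ i f x‖ ≤ C * (1 + ‖x‖) ^ m) →
      ∃ (m : ℕ) (C : ℝ), 0 ≤ C ∧ ∀ i ≤ k, ∀ x, ‖iteratedFDeriv ℝ i f x‖ ≤ C * (1 + ‖x‖) ^ m := by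
  intro k
  induction k with
  | zero =>
    intro h
    obtain ⟨m, C, hC, hb⟩ := h 0 le_rfl
    exact ⟨m, C, hC, fun i hi x => by rw [Nat.le_zero.1 hi]; exact hb x⟩
  | succ l IH =>
    intro h
    obtain ⟨m1, C1, hC1, hb1⟩ := IH (fun i hi => h i (by omega))
    obtain ⟨m2, C2, hC2, hb2⟩ := h (l+1) le_rfl
    refine ⟨max m1 m2, max C1 C2, le_trans hC1 (le_max_left _ _), fun i hi x => ?_⟩
    have h1 : (1:ℝ) ≤ 1 + ‖x‖ := by linarith [norm_nonneg x]
    rcases Nat.lt_or_ge i (l+1) with h' | h'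
    · exact (hb1 i (by omega) x).trans
        (mul_le_mul (le_max_left _ _) (pow_le_pow_right₀ h1 (le_max_left _ _))
          (by positivity) (le_trans hC1 (le_max_left _ _)))
    · have hieq : i = l + 1 := by omega
      subst hieq
      exact (hb2 x).trans
        (mul_le_mul (le_max_right _ _) (pow_le_pow_right₀ h1 (le_max_right _ _))
          (by positivity) (le_trans hC1 (le_max_left _ _)))

private lemma tg_inv {g : E → ℂ} (hg : Function.HasTemperateGrowth g) {C : ℝ} {m : ℕ}
    (hC : 0 < C) (hlow : ∀ x, C * ((1 + ‖x‖) ^ m)⁻¹ ≤ ‖g x‖) :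
    ∀ k : ℕ, ∃ (mk : ℕ) (Ck : ℝ), 0 ≤ Ck ∧
      ∀ x, ‖iteratedFDeriv ℝ k (fun x => (g x)⁻¹) x‖ ≤ Ck * (1 + ‖x‖) ^ mk := by
  have hpos : ∀ x, 0 < ‖g x‖ := fun x =>
    lt_of_lt_of_le (by positivity) (hlow x)
  have hne : ∀ x, g x ≠ 0 := fun x => norm_pos_iff.1 (hpos x)
  have hinv : ContDiff ℝ ∞ (fun x => (g x)⁻¹) := hg.1.inv hne
  intro k
  induction k using Nat.strong_induction_on with
  | _ k IH =>
  match k, IH with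
  | 0, _ =>
    refine ⟨m, C⁻¹, by positivity, fun x => ?_⟩
    rw [norm_iteratedFDeriv_zero, norm_inv]
    have h0 : (0:ℝ) < C * ((1 + ‖x‖) ^ m)⁻¹ := by positivity
    calc ‖g x‖⁻¹ ≤ (C * ((1 + ‖x‖) ^ m)⁻¹)⁻¹ := by
          exact inv_anti₀ h0 (hlow x)
      _ = C⁻¹ * (1 + ‖x‖) ^ m := by rw [mul_inv, inv_inv]
  | (l+1), IH =>
    obtain ⟨mu, Cu, hCu, hub⟩ := uniformize l (fun i hi => IH i (by omega))
    obtain ⟨mg', Cg', hCg', hgb⟩ := hg.norm_iteratedFDeriv_le_uniform (l+1)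
    set a : E → ℂ := fun x => -((g x)⁻¹ * (g x)⁻¹) with ha
    have hdg : Differentiable ℝ g := hg.1.differentiable (by simp)
    have hfd : fderiv ℝ (fun x => (g x)⁻¹) = fun x => a x • fderiv ℝ g x := by
      funext x
      have h1 : HasFDerivAt (fun x => (g x)⁻¹)
          ((-(ContinuousLinearMap.mulLeftRight ℝ ℂ (g x)⁻¹ (g x)⁻¹)).comp (fderiv ℝ g x)) x :=
        (hasFDerivAt_inv' (𝕜 := ℝ) (hne x)).comp x (hdg x).hasFDerivAt
      rw [h1.fderiv]
      ext v
      simp only [ContinuousLinearMap.coe_comp', Function.comp_apply,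
        ContinuousLinearMap.neg_apply, ContinuousLinearMap.mulLeftRight_apply,
        ContinuousLinearMap.coe_smul', Pi.smul_apply, smul_eq_mul, ha]
      ring
    have hB : ContDiff ℝ ∞ (fderiv ℝ g) := hg.1.fderiv_right (by simp)
    have ha_cd : ContDiff ℝ ∞ a := (hinv.mul hinv).neg
    have hab : ∀ i ≤ l, ∀ x,
        ‖iteratedFDeriv ℝ i a x‖ ≤ (2 ^ l * Cu * Cu) * (1 + ‖x‖) ^ (mu + mu) := by
      intro i hi x
      have hnorm : ‖iteratedFDeriv ℝ i a x‖
          = ‖iteratedFDeriv ℝ i (fun x => (g x)⁻¹ * (g x)⁻¹) x‖ := by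
        have heq : a = -(fun x => (g x)⁻¹ * (g x)⁻¹) := rfl
        rw [heq, iteratedFDeriv_neg_apply, norm_neg]
      rw [hnorm]
      refine (aux_mul_bound hinv hinv hCu hCu (fun j hj => hub j (hj.trans hi))
        (fun j hj => hub j (hj.trans hi)) x).trans ?_
      have h1 : (0:ℝ) ≤ 1 + ‖x‖ := by positivity
      gcongr
      · exact one_le_two
    have hBb : ∀ i ≤ l, ∀ x,
        ‖iteratedFDeriv ℝ i (fderiv ℝ g) x‖ ≤ Cg' * (1 + ‖x‖) ^ mg' := by
      intro i hi x
      rw [norm_iteratedFDeriv_fderiv]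
      exact hgb (i+1) (by omega) x
    refine ⟨mu + mu + mg', 2 ^ l * (2 ^ l * Cu * Cu) * Cg', by positivity, fun x => ?_⟩
    have hstep : ‖iteratedFDeriv ℝ (l+1) (fun x => (g x)⁻¹) x‖
        = ‖iteratedFDeriv ℝ l (fun x => a x • fderiv ℝ g x) x‖ := by
      rw [← norm_iteratedFDeriv_fderiv, hfd]
    rw [hstep]
    have := aux_smul_bound ha_cd hB (by positivity) hCg' hab hBb x
    simpa [add_assoc] using this

private lemma cd_eval {m : ℕ} (v : E → Fin m → ℂ) (hv : ∀ i, ContDiff ℝ (⊤ : ℕ∞) (fun x => v x i))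
    (P : MvPolynomial (Fin m) ℂ) : ContDiff ℝ (⊤ : ℕ∞) (fun x => MvPolynomial.eval (v x) P) := by
  induction P using MvPolynomial.induction_on with
  | C a => simpa using contDiff_const (c := a)
  | add p q hp hq => simpa [MvPolynomial.eval_add] using hp.add hq
  | mul_X p i hp => simpa [MvPolynomial.eval_mul, MvPolynomial.eval_X] using hp.mul (hv i)

private lemma tg_eval {m : ℕ} (v : E → Fin m → ℂ)
    (hv : ∀ i, Function.HasTemperateGrowth (fun x => v x i))
    (P : MvPolynomial (Fin m) ℂ) :
    Function.HasTemperateGrowth (fun x => MvPolynomial.eval (v x) P) := by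
  induction P using MvPolynomial.induction_on with
  | C a => simpa using Function.HasTemperateGrowth.const a
  | add p q hp hq => simpa [MvPolynomial.eval_add] using tg_add hp hq
  | mul_X p i hp => simpa [MvPolynomial.eval_mul, MvPolynomial.eval_X] using tg_mul hp (hv i)

/-- Under the Tarski–Seidenberg-derived lower bound (2.1) on |P(σ+iξ₀, iξ₁,…,iξₙ)|,
for each fixed σ > ω₀ the function N̂_σ(ξ) = 1/P(σ+iξ₀, iξ₁,…,iξₙ) is smooth and all
its derivatives grow at most polynomially, i.e. N̂_σ ∈ 𝒪_M(ℝ^{1+n}). -/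
theorem stmt4 (n : ℕ) (P : MvPolynomial (Fin (n + 1)) ℂ)
    (c μ μ' ω₀ : ℝ) (hc : 0 < c) (hμ : 0 < μ) (hμ' : 0 < μ')
    (hP : ∀ (σ : ℝ), ω₀ < σ → ∀ ξ : Fin (n + 1) → ℝ,
      c * (σ - ω₀) ^ μ *
          Real.rpow (1 + ‖((σ : ℂ) + (ξ 0 : ℂ) * Complex.I)‖
              + Real.sqrt (∑ j : Fin n, ξ j.succ ^ 2)) (-μ')
        ≤ ‖(MvPolynomial.eval
            (Fin.cons ((σ : ℂ) + (ξ 0 : ℂ) * Complex.I)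
              fun j => (ξ j.succ : ℂ) * Complex.I) P)‖)
    (σ : ℝ) (hσ : ω₀ < σ) :
    ContDiff ℝ (⊤ : ℕ∞) (fun ξ : Fin (n + 1) → ℝ =>
      (MvPolynomial.eval
          (Fin.cons ((σ : ℂ) + (ξ 0 : ℂ) * Complex.I)
            fun j => (ξ j.succ : ℂ) * Complex.I) P)⁻¹) ∧
    ∀ k : ℕ, ∃ (m : ℕ) (C : ℝ), ∀ ξ : Fin (n + 1) → ℝ,
      ‖iteratedFDeriv ℝ k (fun ξ : Fin (n + 1) → ℝ =>
          (MvPolynomial.eval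
              (Fin.cons ((σ : ℂ) + (ξ 0 : ℂ) * Complex.I)
                fun j => (ξ j.succ : ℂ) * Complex.I) P)⁻¹) ξ‖
        ≤ C * (1 + ‖ξ‖) ^ m := by
  set v : (Fin (n+1) → ℝ) → Fin (n+1) → ℂ :=
    fun ξ => Fin.cons ((σ : ℂ) + (ξ 0 : ℂ) * Complex.I)
      (fun j => (ξ j.succ : ℂ) * Complex.I) with hv
  set g : (Fin (n+1) → ℝ) → ℂ := fun ξ => MvPolynomial.eval (v ξ) P with hg
  -- coordinate functions
  have hcoe : ∀ (i : Fin (n+1)), (fun ξ : Fin (n+1) → ℝ => ((ξ i : ℝ) : ℂ))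
      = ⇑(Complex.ofRealCLM.comp (ContinuousLinearMap.proj i)) := fun i => rfl
  have hcoord_cd : ∀ (i : Fin (n+1)), ContDiff ℝ (⊤ : ℕ∞) (fun ξ : Fin (n+1) → ℝ => ((ξ i : ℝ) : ℂ)) :=
    fun i => by rw [hcoe i]; exact ContinuousLinearMap.contDiff _
  have hcoord_tg : ∀ (i : Fin (n+1)),
      Function.HasTemperateGrowth (fun ξ : Fin (n+1) → ℝ => ((ξ i : ℝ) : ℂ)) :=
    fun i => by rw [hcoe i]; exact ContinuousLinearMap.hasTemperateGrowth _
  have hv_cd : ∀ i, ContDiff ℝ (⊤ : ℕ∞) (fun ξ => v ξ i) := by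
    intro i
    refine Fin.cases ?_ ?_ i
    · simp only [hv, Fin.cons_zero]
      exact contDiff_const.add ((hcoord_cd 0).mul contDiff_const)
    · intro j
      simp only [hv, Fin.cons_succ]
      exact (hcoord_cd j.succ).mul contDiff_const
  have hv_tg : ∀ i, Function.HasTemperateGrowth (fun ξ => v ξ i) := by
    intro i
    refine Fin.cases ?_ ?_ i
    · simp only [hv, Fin.cons_zero]
      exact tg_add (Function.HasTemperateGrowth.const _)
        (tg_mul (hcoord_tg 0) (Function.HasTemperateGrowth.const Complex.I))
    · intro j
      simp only [hv, Fin.cons_succ]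
      exact tg_mul (hcoord_tg j.succ) (Function.HasTemperateGrowth.const Complex.I)
  have hg_cd : ContDiff ℝ (⊤ : ℕ∞) g := cd_eval v hv_cd P
  have hg_tg : Function.HasTemperateGrowth g := tg_eval v hv_tg P
  -- lower bound
  set K : ℝ := 2 + |σ| + Real.sqrt n with hK
  have hK1 : (1:ℝ) ≤ K := by
    have := Real.sqrt_nonneg (n : ℝ)
    have := abs_nonneg σ
    linarith
  set m0 : ℕ := ⌈μ'⌉₊ with hm0
  set C0 : ℝ := c * (σ - ω₀) ^ μ * (K ^ μ')⁻¹ with hC0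
  have hKpos : (0:ℝ) < K := by linarith
  have hC0pos : 0 < C0 := by
    have h1 : (0:ℝ) < (σ - ω₀) ^ μ := Real.rpow_pos_of_pos (by linarith) μ
    have h2 : (0:ℝ) < K ^ μ' := Real.rpow_pos_of_pos hKpos μ'
    positivity
  have hlow : ∀ ξ : Fin (n+1) → ℝ, C0 * ((1 + ‖ξ‖) ^ m0)⁻¹ ≤ ‖g ξ‖ := by
    intro ξ
    have hb := hP σ hσ ξ
    set big : ℝ := 1 + ‖((σ : ℂ) + (ξ 0 : ℂ) * Complex.I)‖
      + Real.sqrt (∑ j : Fin n, ξ j.succ ^ 2) with hbigdef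
    have hbig0 : (0:ℝ) ≤ big := by
      have := norm_nonneg ((σ : ℂ) + (ξ 0 : ℂ) * Complex.I)
      have := Real.sqrt_nonneg (∑ j : Fin n, ξ j.succ ^ 2)
      simp only [hbigdef]; linarith
    have hnorm_le : ∀ i, |ξ i| ≤ ‖ξ‖ := by
      intro i
      have := norm_le_pi_norm ξ i
      rwa [Real.norm_eq_abs] at this
    have habs : ‖((σ : ℂ) + (ξ 0 : ℂ) * Complex.I)‖ ≤ |σ| + ‖ξ‖ := by
      calc ‖((σ : ℂ) + (ξ 0 : ℂ) * Complex.I)‖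
          ≤ ‖(σ : ℂ)‖ + ‖((ξ 0 : ℂ) * Complex.I)‖ :=
            norm_add_le _ _
        _ = |σ| + |ξ 0| := by
            rw [Complex.norm_real, norm_mul, Complex.norm_I, Complex.norm_real, mul_one, Real.norm_eq_abs, Real.norm_eq_abs]
        _ ≤ |σ| + ‖ξ‖ := by have := hnorm_le 0; linarith
    have hsqrt : Real.sqrt (∑ j : Fin n, ξ j.succ ^ 2) ≤ Real.sqrt n * ‖ξ‖ := by
      have hsum : (∑ j : Fin n, ξ j.succ ^ 2) ≤ (n : ℝ) * ‖ξ‖ ^ 2 := by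
        calc (∑ j : Fin n, ξ j.succ ^ 2) ≤ ∑ _j : Fin n, ‖ξ‖ ^ 2 := by
              apply Finset.sum_le_sum
              intro j _
              have h1 := hnorm_le j.succ
              nlinarith [abs_nonneg (ξ j.succ), _root_.sq_abs (ξ j.succ)]
          _ = (n : ℝ) * ‖ξ‖ ^ 2 := by
              rw [Finset.sum_const, Finset.card_univ, Fintype.card_fin, nsmul_eq_mul]
      calc Real.sqrt (∑ j : Fin n, ξ j.succ ^ 2) ≤ Real.sqrt ((n : ℝ) * ‖ξ‖ ^ 2) :=
            Real.sqrt_le_sqrt hsum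
        _ = Real.sqrt n * ‖ξ‖ := by
            rw [Real.sqrt_mul (by positivity), Real.sqrt_sq (norm_nonneg ξ)]
    have hbigle : big ≤ K * (1 + ‖ξ‖) := by
      have hs := Real.sqrt_nonneg (n : ℝ)
      have hn := norm_nonneg ξ
      have ha := abs_nonneg σ
      simp only [hbigdef, hK]
      nlinarith
    have hμ'0 : (0:ℝ) ≤ μ' := le_of_lt hμ'
    have hrpow : (K ^ μ')⁻¹ * ((1 + ‖ξ‖) ^ m0)⁻¹ ≤ big ^ (-μ') := by
      rw [Real.rpow_neg hbig0]
      rw [← mul_inv]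
      apply inv_anti₀
      · exact Real.rpow_pos_of_pos (lt_of_lt_of_le (by norm_num : (0:ℝ) < 1)
          (by simp only [hbigdef]
              have := norm_nonneg ((σ : ℂ) + (ξ 0 : ℂ) * Complex.I)
              have := Real.sqrt_nonneg (∑ j : Fin n, ξ j.succ ^ 2)
              linarith)) μ'
      · calc big ^ μ' ≤ (K * (1 + ‖ξ‖)) ^ μ' :=
              Real.rpow_le_rpow hbig0 hbigle hμ'0
          _ = K ^ μ' * (1 + ‖ξ‖) ^ μ' :=
              Real.mul_rpow (le_of_lt hKpos) (by positivity)
          _ ≤ K ^ μ' * (1 + ‖ξ‖) ^ (m0 : ℝ) := by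
              have h1 : (1:ℝ) ≤ 1 + ‖ξ‖ := by linarith [norm_nonneg ξ]
              have h2 : μ' ≤ (m0 : ℝ) := Nat.le_ceil μ'
              exact mul_le_mul_of_nonneg_left
                (Real.rpow_le_rpow_of_exponent_le h1 h2)
                (le_of_lt (Real.rpow_pos_of_pos hKpos μ'))
          _ = K ^ μ' * (1 + ‖ξ‖) ^ m0 := by rw [Real.rpow_natCast]
    have hchain : C0 * ((1 + ‖ξ‖) ^ m0)⁻¹
        ≤ c * (σ - ω₀) ^ μ * big ^ (-μ') := by
      have hcs : (0:ℝ) ≤ c * (σ - ω₀) ^ μ := by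
        have := Real.rpow_pos_of_pos (show (0:ℝ) < σ - ω₀ by linarith) μ
        positivity
      calc C0 * ((1 + ‖ξ‖) ^ m0)⁻¹
          = c * (σ - ω₀) ^ μ * ((K ^ μ')⁻¹ * ((1 + ‖ξ‖) ^ m0)⁻¹) := by
            simp only [hC0]; ring
        _ ≤ c * (σ - ω₀) ^ μ * big ^ (-μ') :=
            mul_le_mul_of_nonneg_left hrpow hcs
    refine hchain.trans ?_
    exact hb
  have hpos : ∀ ξ, 0 < ‖g ξ‖ := fun ξ =>
    lt_of_lt_of_le (by positivity) (hlow ξ)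
  have hne : ∀ ξ, g ξ ≠ 0 := fun ξ => norm_pos_iff.1 (hpos ξ)
  constructor
  · exact hg_cd.inv hne
  · intro k
    obtain ⟨mk, Ck, _, hCkb⟩ := tg_inv hg_tg hC0pos hlow k
    exact ⟨mk, Ck, fun ξ => hCkb ξ⟩
end

section
/- Let V(z,w) be a nonzero polynomial in two variables with real coefficients, and let σ : [0,∞) → ℝ be a function such that V(r, σ(r)) = 0 for all r ≥ 0 and σ(r) ≤ a + b·log(1+r) for some constants a ∈ ℝ, b > 0. Then sup{σ(r) : r ∈ [0,∞)} < ∞. -/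
open MvPolynomial

open Polynomial Filter in
private lemma aux_tendsto_eval_div_pow (P : Polynomial ℝ) (k : ℕ) (h : P.natDegree ≤ k) :
    Tendsto (fun x : ℝ => P.eval x / x ^ k) atTop (nhds (P.coeff k)) := by
  have hsum : ∀ x : ℝ, P.eval x = ∑ i ∈ Finset.range (k + 1), P.coeff i * x ^ i := fun x =>
    P.eval_eq_sum_range' (Nat.lt_succ_of_le h) x
  have key : Tendsto (fun x : ℝ => ∑ i ∈ Finset.range (k + 1), P.coeff i * x ^ i / x ^ k) atTop
      (nhds (∑ i ∈ Finset.range (k + 1), if i = k then P.coeff k else 0)) := by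
    refine tendsto_finset_sum _ fun i hi => ?_
    rcases eq_or_lt_of_le (Nat.lt_succ_iff.mp (Finset.mem_range.mp hi)) with h' | h'
    · subst h'
      rw [if_pos rfl]
      refine Tendsto.congr' ?_ tendsto_const_nhds
      filter_upwards [eventually_gt_atTop (0:ℝ)] with x hx
      rw [mul_div_assoc, div_self (pow_ne_zero _ hx.ne'), mul_one]
    · simp only [if_neg h'.ne]
      obtain ⟨t, ht⟩ : ∃ t, k = i + t := ⟨k - i, by omega⟩
      have ht0 : t ≠ 0 := by omega
      have h2 : Tendsto (fun x : ℝ => P.coeff i * (x ^ t)⁻¹) atTop (nhds (P.coeff i * 0)) :=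
        ((tendsto_pow_atTop ht0).inv_tendsto_atTop).const_mul _
      rw [mul_zero] at h2
      refine Tendsto.congr' ?_ h2
      filter_upwards [eventually_gt_atTop (0:ℝ)] with x hx
      rw [ht, pow_add]
      field_simp
  rw [Finset.sum_ite_eq' (Finset.range (k + 1)) k, if_pos (Finset.self_mem_range_succ k)] at key
  refine key.congr fun x => ?_
  rw [hsum x, Finset.sum_div]

open Filter in
private lemma aux_tendsto_logpow (c B : ℝ) (k : ℕ) :
    Tendsto (fun x : ℝ => (c + B * Real.log (1 + x)) ^ k / x) atTop (nhds 0) := by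
  have base : ∀ i : ℕ, Tendsto (fun x : ℝ => Real.log (1 + x) ^ i / x) atTop (nhds 0) := by
    intro i
    have h := Real.tendsto_pow_log_div_mul_add_atTop 1 (-1) i one_ne_zero
    have hcomp := h.comp (tendsto_atTop_add_const_left atTop (1:ℝ) tendsto_id)
    refine hcomp.congr fun x => ?_
    show Real.log (1 + x) ^ i / (1 * (1 + x) + -1) = _
    norm_num
  have key : Tendsto (fun x : ℝ => ∑ i ∈ Finset.range (k + 1),
      c ^ i * (B * Real.log (1 + x)) ^ (k - i) * (k.choose i) / x) atTop
      (nhds (∑ _i ∈ Finset.range (k + 1), (0:ℝ))) := by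
    refine tendsto_finset_sum _ fun i _ => ?_
    have h2 := (base (k - i)).const_mul (c ^ i * B ^ (k - i) * (k.choose i))
    rw [mul_zero] at h2
    refine h2.congr fun x => ?_
    rw [mul_pow]; ring
  rw [Finset.sum_const_zero] at key
  refine key.congr fun x => ?_
  rw [add_pow c (B * Real.log (1 + x)) k, Finset.sum_div]

open Polynomial in
private noncomputable def toQ : MvPolynomial (Fin 2) ℝ →+* Polynomial (Polynomial ℝ) :=
  MvPolynomial.eval₂Hom (Polynomial.C.comp Polynomial.C)
    ![Polynomial.C Polynomial.X, Polynomial.X]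

open Polynomial in
private lemma toQ_ne_zero {V : MvPolynomial (Fin 2) ℝ} (hV : V ≠ 0) : toQ V ≠ 0 := by
  intro h
  have hψ : (Polynomial.eval₂RingHom
      (Polynomial.eval₂RingHom MvPolynomial.C (MvPolynomial.X (0 : Fin 2)))
      (MvPolynomial.X (1 : Fin 2))).comp toQ = RingHom.id _ := by
    apply MvPolynomial.ringHom_ext
    · intro r; simp [toQ]
    · intro i; fin_cases i <;> simp [toQ]
  have h2 := DFunLike.congr_fun hψ V
  simp only [RingHom.comp_apply, RingHom.id_apply] at h2
  rw [h, map_zero] at h2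
  exact hV h2.symm

open Polynomial in
private lemma toQ_eval (V : MvPolynomial (Fin 2) ℝ) (z w : ℝ) :
    MvPolynomial.eval ![z, w] V = ((toQ V).eval (Polynomial.C w)).eval z := by
  have h : (MvPolynomial.eval ![z, w] : MvPolynomial (Fin 2) ℝ →+* ℝ) =
      (Polynomial.evalRingHom z).comp ((Polynomial.evalRingHom (Polynomial.C w)).comp toQ) := by
    apply MvPolynomial.ringHom_ext
    · intro r; simp [toQ]
    · intro i; fin_cases i <;> simp [toQ]
  have h2 := DFunLike.congr_fun h V
  simpa using h2

open Polynomial in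
private lemma eval_expand (Q : Polynomial (Polynomial ℝ)) (z w : ℝ) :
    (Q.eval (Polynomial.C w)).eval z =
      ∑ j ∈ Finset.range (Q.natDegree + 1), (Q.coeff j).eval z * w ^ j := by
  conv_lhs => rw [Polynomial.eval_eq_sum_range (p := Q)]
  rw [Polynomial.eval_finset_sum]
  refine Finset.sum_congr rfl fun j _ => ?_
  simp

open Polynomial Filter in
/-- If V(z,w) is a nonzero real polynomial, σ : [0,∞) → ℝ satisfies V(r,σ(r)) = 0 for
all r ≥ 0, and σ(r) ≤ a + b·log(1+r), then σ is bounded above on [0,∞). -/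
theorem stmt11 (V : MvPolynomial (Fin 2) ℝ) (hV : V ≠ 0) (σ : ℝ → ℝ) (a b : ℝ)
    (hb : 0 < b)
    (hroot : ∀ r : ℝ, 0 ≤ r → MvPolynomial.eval ![r, σ r] V = 0)
    (hlog : ∀ r : ℝ, 0 ≤ r → σ r ≤ a + b * Real.log (1 + r)) :
    ∃ M : ℝ, ∀ r : ℝ, 0 ≤ r → σ r ≤ M := by
  classical
  by_contra hcon
  push_neg at hcon
  set Q : Polynomial (Polynomial ℝ) := toQ V with hQdef
  have hQ : Q ≠ 0 := toQ_ne_zero hV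
  set d := Q.natDegree with hd
  set m := (Finset.range (d + 1)).sup (fun j => (Q.coeff j).natDegree) with hm
  have hle : ∀ j ∈ Finset.range (d + 1), (Q.coeff j).natDegree ≤ m :=
    fun j hj => Finset.le_sup (f := fun j => (Q.coeff j).natDegree) hj
  have hdmem : d ∈ Finset.range (d + 1) := Finset.self_mem_range_succ d
  have hdne : Q.coeff d ≠ 0 := by
    rw [hd]
    exact Polynomial.leadingCoeff_ne_zero.mpr hQ
  have hSne : ∃ j ∈ Finset.range (d + 1), Q.coeff j ≠ 0 ∧ (Q.coeff j).natDegree = m := by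
    obtain ⟨j0, hj0mem, hj0⟩ := Finset.exists_mem_eq_sup (Finset.range (d + 1))
      Finset.nonempty_range_add_one (fun j => (Q.coeff j).natDegree)
    by_cases h0 : Q.coeff j0 = 0
    · refine ⟨d, hdmem, hdne, ?_⟩
      have hm0 : m = 0 := by rw [hm, hj0, h0]; simp
      have := hle d hdmem
      omega
    · exact ⟨j0, hj0mem, h0, hj0.symm⟩
  set S := (Finset.range (d + 1)).filter
    (fun j => Q.coeff j ≠ 0 ∧ (Q.coeff j).natDegree = m) with hS
  have hSne' : S.Nonempty := by
    obtain ⟨j, hj, h⟩ := hSne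
    exact ⟨j, Finset.mem_filter.mpr ⟨hj, h⟩⟩
  set J := S.max' hSne' with hJ
  have hJS : J ∈ S := S.max'_mem hSne'
  have hJunpack := Finset.mem_filter.mp hJS
  have hJmem : J ∈ Finset.range (d + 1) := hJunpack.1
  have hJne : Q.coeff J ≠ 0 := hJunpack.2.1
  have hJdeg : (Q.coeff J).natDegree = m := hJunpack.2.2
  have hmax : ∀ j ∈ Finset.range (d + 1), J < j →
      (Q.coeff j = 0 ∨ (Q.coeff j).natDegree < m) := by
    intro j hj hJj
    by_contra hcontra
    push_neg at hcontra
    obtain ⟨h1, h2⟩ := hcontra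
    have hdeg : (Q.coeff j).natDegree = m := le_antisymm (hle j hj) h2
    have hjS : j ∈ S := Finset.mem_filter.mpr ⟨hj, h1, hdeg⟩
    exact absurd (S.le_max' j hjS) (not_le.mpr hJj)
  set A := (Q.coeff J).coeff m with hA
  have hAne : A ≠ 0 := by
    rw [hA, ← hJdeg]
    exact Polynomial.leadingCoeff_ne_zero.mpr hJne
  -- pick the sequence
  have hc : ∀ n : ℕ, ∃ r, 0 ≤ r ∧ max (n : ℝ) (a + b * Real.log (1 + (n : ℝ))) < σ r :=
    fun n => hcon _
  choose r hr0 hrbig using hc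
  set w : ℕ → ℝ := fun n => σ (r n) with hw
  have hwgt : ∀ n : ℕ, (n : ℝ) < w n := fun n => lt_of_le_of_lt (le_max_left _ _) (hrbig n)
  have hrgt : ∀ n : ℕ, (n : ℝ) < r n := by
    intro n
    have h1 : a + b * Real.log (1 + (n : ℝ)) < σ (r n) :=
      lt_of_le_of_lt (le_max_right _ _) (hrbig n)
    have h2 : σ (r n) ≤ a + b * Real.log (1 + r n) := hlog _ (hr0 n)
    have h3 : Real.log (1 + (n : ℝ)) < Real.log (1 + r n) := by
      have : b * Real.log (1 + (n : ℝ)) < b * Real.log (1 + r n) := by linarith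
      exact (mul_lt_mul_iff_right₀ hb).mp this
    by_contra h5
    push_neg at h5
    have h6 : (1 : ℝ) + r n ≤ 1 + (n : ℝ) := by linarith
    have h7 : (0 : ℝ) < 1 + r n := by have := hr0 n; linarith
    have := (Real.log_le_log_iff h7 (by positivity)).mpr h6
    linarith
  have hrtop : Tendsto r atTop atTop :=
    tendsto_atTop_mono (fun n => (hrgt n).le) tendsto_natCast_atTop_atTop
  have hwtop : Tendsto w atTop atTop :=
    tendsto_atTop_mono (fun n => (hwgt n).le) tendsto_natCast_atTop_atTop
  have hEv : ∀ᶠ n in atTop, 1 ≤ r n ∧ 1 ≤ w n :=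
    (hrtop.eventually_ge_atTop 1).and (hwtop.eventually_ge_atTop 1)
  have hzero : ∀ n, ∑ j ∈ Finset.range (d + 1), (Q.coeff j).eval (r n) * (w n) ^ j = 0 := by
    intro n
    rw [← eval_expand, ← toQ_eval]
    exact hroot _ (hr0 n)
  have hsum : Tendsto (fun n => ∑ j ∈ Finset.range (d + 1),
      (Q.coeff j).eval (r n) * (w n) ^ j / ((r n) ^ m * (w n) ^ J)) atTop
      (nhds (∑ j ∈ Finset.range (d + 1), if j = J then A else 0)) := by
    refine tendsto_finset_sum _ fun j hj => ?_
    rcases lt_trichotomy j J with hlt | heq | hgt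
    · rw [if_neg hlt.ne]
      obtain ⟨t, ht⟩ : ∃ t, J = j + t := ⟨J - j, by omega⟩
      have ht0 : t ≠ 0 := by omega
      have hfirst : Tendsto (fun n => (Q.coeff j).eval (r n) / (r n) ^ m) atTop
          (nhds ((Q.coeff j).coeff m)) :=
        (aux_tendsto_eval_div_pow _ m (hle j hj)).comp hrtop
      have hsecond : Tendsto (fun n => ((w n) ^ t)⁻¹) atTop (nhds 0) :=
        ((tendsto_pow_atTop ht0).comp hwtop).inv_tendsto_atTop
      have hmul := hfirst.mul hsecond
      rw [mul_zero] at hmul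
      refine Tendsto.congr' ?_ hmul
      filter_upwards [hEv] with n hn
      obtain ⟨hrn, hwn⟩ := hn
      have hw0 : (0:ℝ) < w n := by linarith
      have hr0' : (0:ℝ) < r n := by linarith
      rw [ht, pow_add]
      field_simp
    · rw [if_pos heq, heq]
      have hfirst : Tendsto (fun n => (Q.coeff J).eval (r n) / (r n) ^ m) atTop (nhds A) :=
        (aux_tendsto_eval_div_pow _ m (le_of_eq hJdeg)).comp hrtop
      refine Tendsto.congr' ?_ hfirst
      filter_upwards [hEv] with n hn
      obtain ⟨hrn, hwn⟩ := hn
      have hw0 : (0:ℝ) < w n := by linarith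
      have hr0' : (0:ℝ) < r n := by linarith
      field_simp
    · rw [if_neg hgt.ne']
      rcases hmax j hj hgt with h0 | hdeglt
      · refine tendsto_const_nhds.congr fun n => ?_
        rw [h0]
        simp
      · obtain ⟨m', hm'⟩ : ∃ m', m = m' + 1 := ⟨m - 1, by omega⟩
        have hdegle : (Q.coeff j).natDegree ≤ m' := by omega
        obtain ⟨t, ht⟩ : ∃ t, j = J + t := ⟨j - J, by omega⟩
        have hfirst : Tendsto (fun n => (Q.coeff j).eval (r n) / (r n) ^ m') atTop
            (nhds ((Q.coeff j).coeff m')) :=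
          (aux_tendsto_eval_div_pow _ m' hdegle).comp hrtop
        have hsecond : Tendsto (fun n => (w n) ^ t / r n) atTop (nhds 0) := by
          have hupper : Tendsto (fun n => (a + b * Real.log (1 + r n)) ^ t / r n) atTop
              (nhds 0) := (aux_tendsto_logpow a b t).comp hrtop
          refine tendsto_of_tendsto_of_tendsto_of_le_of_le' tendsto_const_nhds hupper ?_ ?_
          · filter_upwards [hEv] with n hn
            obtain ⟨hrn, hwn⟩ := hn
            exact div_nonneg (pow_nonneg (by linarith) _) (by linarith)
          · filter_upwards [hEv] with n hn
            obtain ⟨hrn, hwn⟩ := hn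
            have hσ : w n ≤ a + b * Real.log (1 + r n) := hlog _ (hr0 n)
            have hpow : (w n) ^ t ≤ (a + b * Real.log (1 + r n)) ^ t :=
              pow_le_pow_left₀ (by linarith) hσ t
            exact (div_le_div_iff_of_pos_right (by linarith)).mpr hpow
        have hmul := hfirst.mul hsecond
        rw [mul_zero] at hmul
        refine Tendsto.congr' ?_ hmul
        filter_upwards [hEv] with n hn
        obtain ⟨hrn, hwn⟩ := hn
        have hw0 : (0:ℝ) < w n := by linarith
        have hr0' : (0:ℝ) < r n := by linarith
        rw [ht, hm', pow_add, pow_add, pow_one]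
        field_simp
  rw [Finset.sum_ite_eq' (Finset.range (d + 1)) J, if_pos hJmem] at hsum
  have hGzero : (fun n => ∑ j ∈ Finset.range (d + 1),
      (Q.coeff j).eval (r n) * (w n) ^ j / ((r n) ^ m * (w n) ^ J)) = fun _ => (0:ℝ) := by
    funext n
    rw [← Finset.sum_div, hzero n, zero_div]
  rw [hGzero] at hsum
  exact hAne (tendsto_nhds_unique hsum tendsto_const_nhds)
end

section
/- Let F ⊆ ℝ² be a semi-algebraic set, written as a finite union F = ⋃_{i=1}^k (F_i ∩ G_{i,1} ∩ ⋯ ∩ G_{i,j(i)}) with F_i = {x : P_i(x) = 0} and G_{i,j} = {x : Q_{i,j}(x) > 0} for real polynomials P_i, Q_{i,j}. Suppose σ : [0,∞) → ℝ satisfies σ(r) = sup{s : (r,s) ∈ F} and this supremum is finite for every r. Then there is a nonzero real polynomial V in two variables such that V(r, σ(r)) = 0 for all r ∈ [0,∞). -/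
/-!
Take for `V` the product of all the nonzero `P i` and `Q i l`. For `r ≥ 0`, the fiber over `r`
is a finite union of pieces `{s | P i (r, s) = 0 ∧ ∀ l, 0 < Q i l (r, s)}`, so `σ r` lies in the
closure of one piece and bounds it from above. By continuity `P i (r, σ r) = 0`, which settles
the case `P i ≠ 0`. If `P i = 0`, the piece is open and cannot contain its own supremum, so some
`Q i l (r, σ r)` vanishes, while `Q i l ≠ 0` because the piece is nonempty.
-/

open MvPolynomial Set

section LeastUpperBound

variable {α : Type*} [TopologicalSpace α] [LinearOrder α] [OrderTopology α] {a : α}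

theorem IsLUB.exists_isLUB_of_iUnion [NoBotOrder α] {ι : Type*} [Finite ι] {A : ι → Set α}
    (ha : IsLUB (⋃ i, A i) a) : ∃ i, IsLUB (A i) a := by
  have : a ∈ ⋃ i, closure (A i) := closure_iUnion_of_finite A ▸ ha.mem_closure ha.nonempty
  obtain ⟨i, hi⟩ := mem_iUnion.1 this
  exact ⟨i, isLUB_of_mem_closure (fun x hx => ha.1 (mem_iUnion_of_mem i hx)) hi⟩

theorem IsLUB.mem_of_subset_of_isClosed [NoBotOrder α] {A C : Set α} (ha : IsLUB A a) (hAC : A ⊆ C)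
    (hC : IsClosed C) : a ∈ C :=
  closure_minimal hAC hC (ha.mem_closure ha.nonempty)

theorem IsOpen.notMem_of_mem_upperBounds [DenselyOrdered α] [NoMaxOrder α] {U : Set α}
    (hU : IsOpen U) (ha : a ∈ upperBounds U) : a ∉ U := fun haU => by
  obtain ⟨b, hbU, hab⟩ := nonempty_nhds_inter_Ioi (hU.mem_nhds haU) (not_isMax a)
  exact (ha hbU).not_gt hab

end LeastUpperBound

theorem IsLUB.boundary_of_basicSet {ι : Type*} [Finite ι] {p : ℝ → ℝ} {q : ι → ℝ → ℝ} {a : ℝ}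
    (hp : Continuous p) (hq : ∀ l, Continuous (q l))
    (ha : IsLUB {t | p t = 0 ∧ ∀ l, 0 < q l t} a) :
    p a = 0 ∧ ((∀ t, p t = 0) → ∃ l, q l a = 0) := by
  have hclosed : a ∈ {t | p t = 0 ∧ ∀ l, 0 ≤ q l t} := by
    refine ha.mem_of_subset_of_isClosed (fun t ht => ⟨ht.1, fun l => (ht.2 l).le⟩) ?_
    simp only [ofPred_and, ofPred_forall]
    exact (isClosed_eq hp continuous_const).inter
      (isClosed_iInter fun l => isClosed_le continuous_const (hq l))
  refine ⟨hclosed.1, fun hp0 => ?_⟩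
  have hopen : IsOpen {t | p t = 0 ∧ ∀ l, 0 < q l t} := by
    simp only [hp0, true_and, ofPred_forall]
    exact isOpen_iInter_of_finite fun l => isOpen_lt continuous_const (hq l)
  by_contra! hne
  exact hopen.notMem_of_mem_upperBounds ha.1
    ⟨hp0 a, fun l => (hclosed.2 l).lt_of_ne (hne l).symm⟩

theorem continuous_eval_vecCons {R : Type*} [CommSemiring R] [TopologicalSpace R]
    [IsTopologicalSemiring R] (p : MvPolynomial (Fin 2) R) (r : R) :
    Continuous fun s : R => eval ![r, s] p :=
  (continuous_eval p).comp (by fun_prop)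

section ProdOfNeZero

variable {M : Type*} [CommMonoidWithZero M] {ι : Type*} [Fintype ι]

open Classical in
noncomputable def prodOfNeZero (g : ι → M) : M :=
  ∏ i, if g i = 0 then 1 else g i

theorem prodOfNeZero_ne_zero [Nontrivial M] [NoZeroDivisors M] (g : ι → M) :
    prodOfNeZero g ≠ 0 :=
  Finset.prod_ne_zero_iff.2 fun i _ => by
    split_ifs with h
    exacts [one_ne_zero, h]

theorem map_prodOfNeZero_eq_zero {N F : Type*} [CommMonoidWithZero N] [FunLike F M N]
    [MonoidWithZeroHomClass F M N] (φ : F) {g : ι → M} {i : ι} (hi : g i ≠ 0)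
    (h : φ (g i) = 0) : φ (prodOfNeZero g) = 0 := by
  rw [prodOfNeZero, map_prod]
  exact Finset.prod_eq_zero (Finset.mem_univ i) (by rw [if_neg hi, h])

end ProdOfNeZero

/-- If F ⊆ ℝ² is given as a finite union F = ⋃ᵢ (Fᵢ ∩ G_{i,1} ∩ ⋯ ∩ G_{i,j(i)}) with
Fᵢ = {P_i = 0} and G_{i,j} = {Q_{i,j} > 0}, and σ(r) is the (finite) supremum of the
fiber {s : (r,s) ∈ F} for every r ≥ 0, then there is a nonzero real polynomial V in
two variables with V(r, σ(r)) = 0 for all r ≥ 0. -/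
theorem stmt13 (k : ℕ) (j : Fin k → ℕ)
    (P : Fin k → MvPolynomial (Fin 2) ℝ)
    (Q : (i : Fin k) → Fin (j i) → MvPolynomial (Fin 2) ℝ)
    (F : Set (Fin 2 → ℝ))
    (hF : F = ⋃ i : Fin k,
      ({x : Fin 2 → ℝ | MvPolynomial.eval x (P i) = 0} ∩
        ⋂ l : Fin (j i), {x : Fin 2 → ℝ | 0 < MvPolynomial.eval x (Q i l)}))
    (σ : ℝ → ℝ)
    (hσ : ∀ r : ℝ, 0 ≤ r → IsLUB {s : ℝ | ![r, s] ∈ F} (σ r)) :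
    ∃ V : MvPolynomial (Fin 2) ℝ, V ≠ 0 ∧
      ∀ r : ℝ, 0 ≤ r → MvPolynomial.eval ![r, σ r] V = 0 := by
  refine ⟨prodOfNeZero (Sum.elim P fun il : Σ i, Fin (j i) => Q il.1 il.2),
    prodOfNeZero_ne_zero _, fun r hr => ?_⟩
  have hfiber : {s | ![r, s] ∈ F} =
      ⋃ i, {s | eval ![r, s] (P i) = 0 ∧ ∀ l, 0 < eval ![r, s] (Q i l)} := by
    subst hF
    ext s
    simp
  obtain ⟨i, hi⟩ := (hfiber ▸ hσ r hr).exists_isLUB_of_iUnion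
  obtain ⟨hPi, hQi⟩ := hi.boundary_of_basicSet (continuous_eval_vecCons _ r)
    fun l => continuous_eval_vecCons _ r
  by_cases hP : P i = 0
  · obtain ⟨l, hl⟩ := hQi fun t => by simp [hP]
    obtain ⟨t, -, ht⟩ := hi.nonempty
    have hQ : Q i l ≠ 0 := fun h => by simpa [h] using ht l
    exact map_prodOfNeZero_eq_zero (eval _) (i := Sum.inr ⟨i, l⟩) hQ hl
  · exact map_prodOfNeZero_eq_zero (eval _) (i := Sum.inl i) hP hPi
end
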